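/- arXiv:cs/0312048 — 6 statements merged into one kernel-verified Lean document; each statement's English description precedes it below -/
import Mathlib

section
/- Let X be a finite type and let R be a binary relation on subsets of Δ_X; write dom(R) = {KB ⊆ Δ_X : R(KB, θ) for some θ}. Suppose that for every KB ∈ dom(R): (Reflexivity) R(KB, KB); (Right Weakening) if R(KB, θ) and θ ⊆ ψ then R(KB, ψ); (Infinitary And) for every family Σ of subsets of Δ_X, if R(KB, θ) for all θ ∈ Σ and ⋂Σ ⊆ ψ, then R(KB, ψ); (Consistency) if KB ≠ ∅ then not R(KB, ∅). Then there exists an X-inference procedure I with domain dom(R) such that for all KB ∈ dom(R) and all θ ⊆ Δ_X: R(KB, θ) iff KB ⊢_I θ. -/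
/-- A probability measure (probability mass function) on a finite type. -/
structure PM (X : Type) [Fintype X] where
  pm : X → ℝ
  nonneg : ∀ x, 0 ≤ pm x
  total : ∑ x, pm x = 1

namespace PM

variable {X Y : Type} [Fintype X] [Fintype Y]

/-- The probability of a set `S`: `μ(S) = ∑_{x ∈ S} μ(x)`. -/
noncomputable def prob (μ : PM X) (S : Set X) : ℝ := ∑ x, S.indicator μ.pm x

lemma prob_nonneg (μ : PM X) (S : Set X) : 0 ≤ μ.prob S :=
  Finset.sum_nonneg fun x _ => Set.indicator_apply_nonneg fun _ => μ.nonneg x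

/-- Marginal on the first component: `μ_X(A) = μ(A × Y)`. -/
noncomputable def margFst (μ : PM (X × Y)) : PM X where
  pm x := ∑ y, μ.pm (x, y)
  nonneg x := Finset.sum_nonneg fun y _ => μ.nonneg (x, y)
  total := by rw [← μ.total, ← Fintype.sum_prod_type]

/-- Marginal on the second component: `μ_Y(B) = μ(X × B)`. -/
noncomputable def margSnd (μ : PM (X × Y)) : PM Y where
  pm y := ∑ x, μ.pm (x, y)
  nonneg y := Finset.sum_nonneg fun x _ => μ.nonneg (x, y)
  total := by rw [← μ.total, ← Fintype.sum_prod_type_right]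

/-- Conditioning `μ|S`; the junk value `μ` is returned when `μ(S) = 0`. -/
noncomputable def cond (μ : PM X) (S : Set X) : PM X :=
  if h : 0 < μ.prob S then
    { pm := fun x => S.indicator μ.pm x / μ.prob S
      nonneg := fun x =>
        div_nonneg (Set.indicator_apply_nonneg fun _ => μ.nonneg x) (le_of_lt h)
      total := by
        rw [← Finset.sum_div]
        exact div_self (ne_of_gt h) }
  else μ

end PM

open PM

/-- An `X`-inference procedure: a partial map on sets of probability measures. -/
structure InfProc (X : Type) [Fintype X] where
  dom : Set (Set (PM X))
  map : Set (PM X) → Set (PM X)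
  map_subset : ∀ A ∈ dom, map A ⊆ A
  map_empty_iff : ∀ A ∈ dom, (map A = ∅ ↔ A = ∅)

/-- `KB ⊢_I θ`. -/
def Infers {X : Type} [Fintype X] (I : InfProc X) (KB θ : Set (PM X)) : Prop :=
  I.map KB ⊆ θ

section Lift

variable {X Y : Type} [Fintype X] [Fintype Y]

/-- A constraint on `Δ_X` viewed as a constraint on `Δ_{X×Y}`: `KB↑`. -/
def liftKB (Y : Type) [Fintype Y] (KB : Set (PM X)) : Set (PM (X × Y)) :=
  {μ | margFst μ ∈ KB}

/-- `proj_X(B) = {μ_X : μ ∈ B}`. -/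
def projFst (B : Set (PM (X × Y))) : Set (PM X) := margFst '' B

/-- `ψ ⊆ Δ_{X×Y}` is `X`-conservative over `KB ⊆ Δ_X`. -/
def Conservative (KB : Set (PM X)) (ψ : Set (PM (X × Y))) : Prop :=
  projFst (liftKB Y KB ∩ ψ) = KB

end Lift

/-- Robustness of a finitary inference procedure. -/
def Robust (I : ∀ (X : Type) [Fintype X], InfProc X) : Prop :=
  ∀ (X Y : Type) [Fintype X] [Fintype Y], ∀ KB φ : Set (PM X),
    KB ∈ (I X).dom → ∀ ψ : Set (PM (X × Y)), Conservative KB ψ →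
      (Infers (I X) KB φ ↔ Infers (I (X × Y)) (liftKB Y KB ∩ ψ) (liftKB Y φ))

/-- An inference procedure is essentially entailment. -/
def EssEntail {X : Type} [Fintype X] (I : InfProc X) : Prop :=
  ∀ KB ∈ I.dom, ∀ (S : Set X) (α β : ℝ),
    Infers I KB {μ | α < μ.prob S ∧ μ.prob S < β} →
    KB ⊆ {μ | α ≤ μ.prob S ∧ μ.prob S ≤ β}

def DI1 (I : ∀ (X : Type) [Fintype X], InfProc X) : Prop :=
  ∀ (X : Type) [Fintype X], ∀ (S : Set X) (α β : ℝ), α ≤ β →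
    {μ : PM X | α ≤ μ.prob S ∧ μ.prob S ≤ β} ∈ (I X).dom

def DI2 (I : ∀ (X : Type) [Fintype X], InfProc X) : Prop :=
  ∀ (X Y : Type) [Fintype X] [Fintype Y], ∀ KB : Set (PM X),
    KB ∈ (I X).dom → liftKB Y KB ∈ (I (X × Y)).dom

def DI3 (I : ∀ (X : Type) [Fintype X], InfProc X) : Prop :=
  ∀ (X : Type) [Fintype X], ∀ KB₁ KB₂ : Set (PM X),
    KB₁ ∈ (I X).dom → KB₂ ∈ (I X).dom → KB₁ ∩ KB₂ ∈ (I X).dom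

/-- An `X`-`Y` embedding: a homomorphism of set algebras. -/
structure Emb (X Y : Type) where
  f : Set X → Set Y
  map_union : ∀ S T, f (S ∪ T) = f S ∪ f T
  map_compl : ∀ S, f Sᶜ = (f S)ᶜ

/-- A faithful embedding. -/
def Emb.Faithful {X Y : Type} (e : Emb X Y) : Prop :=
  ∀ S T : Set X, S ⊆ T ↔ e.f S ⊆ e.f T

section Embeddings

variable {X Y : Type} [Fintype X] [Fintype Y]

/-- `μ` and `ν` correspond under `f`. -/
def Corr (e : Emb X Y) (μ : PM X) (ν : PM Y) : Prop :=
  ∀ S : Set X, μ.prob S = ν.prob (e.f S)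

/-- `f*(D)`, the union over `μ ∈ D` of the measures corresponding to `μ`. -/
def fstar (e : Emb X Y) (D : Set (PM X)) : Set (PM Y) :=
  {ν | ∃ μ ∈ D, Corr e μ ν}

/-- Sets of measures `D_X` and `D_Y` correspond under `f`. -/
def SetCorr (e : Emb X Y) (DX : Set (PM X)) (DY : Set (PM Y)) : Prop :=
  (∀ ν ∈ DY, ∃ μ ∈ DX, Corr e μ ν) ∧ (∀ μ ∈ DX, ∃ ν ∈ DY, Corr e μ ν)

end Embeddings

/-- Representation independence of a finitary inference procedure. -/
def RepInd (I : ∀ (X : Type) [Fintype X], InfProc X) : Prop :=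
  ∀ (X Y : Type) [Fintype X] [Fintype Y] (e : Emb X Y), e.Faithful →
    (∀ KB : Set (PM X), KB ∈ (I X).dom ↔ fstar e KB ∈ (I Y).dom) ∧
    (∀ KB : Set (PM X), KB ∈ (I X).dom → ∀ θ : Set (PM X),
      (Infers (I X) KB θ ↔ Infers (I Y) (fstar e KB) (fstar e θ)))

def DI4 (I : ∀ (X : Type) [Fintype X], InfProc X) : Prop :=
  ∀ (X Y : Type) [Fintype X] [Fintype Y] (e : Emb X Y), e.Faithful →
    ∀ KB : Set (PM X), (KB ∈ (I X).dom ↔ fstar e KB ∈ (I Y).dom)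

/-- `A ⇔ B` for sets of measures. -/
def iffSet {α : Type*} (A B : Set α) : Set α := (A ∩ B) ∪ (Aᶜ ∩ Bᶜ)

def DI5 (I : ∀ (X : Type) [Fintype X], InfProc X) : Prop :=
  ∀ (X Y : Type) [Fintype X] [Fintype Y] (KB : Set (PM (X × Y))) (e : Emb X Y),
    e.Faithful → KB ∈ (I (X × Y)).dom → ∀ φ₁ : Set (PM X),
      KB ∩ iffSet (liftKB Y φ₁) {μ | margSnd μ ∈ fstar e φ₁} ∈ (I (X × Y)).dom

/-- Minimal default independence. -/
def MDI (I : ∀ (X : Type) [Fintype X], InfProc X) : Prop :=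
  ∀ (X Y : Type) [Fintype X] [Fintype Y], ∀ KB : Set (PM X), ∀ (S : Set X) (T : Set Y),
    liftKB Y KB ∈ (I (X × Y)).dom →
    Infers (I (X × Y)) (liftKB Y KB)
      {μ | μ.prob (S ×ˢ T) = μ.prob (S ×ˢ (Set.univ : Set Y)) * μ.prob ((Set.univ : Set X) ×ˢ T)}

/-- `KB` depends only on `S₁, …, S_k`. -/
def DependsOnly {X : Type} [Fintype X] {k : ℕ} (KB : Set (PM X)) (S : Fin k → Set X) : Prop :=
  ∀ μ μ' : PM X, (∀ i, μ.prob (S i) = μ'.prob (S i)) → (μ ∈ KB ↔ μ' ∈ KB)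

/-- An atom over `S₁, …, S_k`. -/
def Atom {X : Type} {k : ℕ} (S : Fin k → Set X) (c : Fin k → Bool) : Set X :=
  ⋂ i, (if c i then S i else (S i)ᶜ)

section KL

variable {X : Type} [Fintype X]

/-- Absolute continuity of pmfs. -/
def AbsCont (μ' μ : PM X) : Prop := ∀ x, μ.pm x = 0 → μ'.pm x = 0

/-- Relative entropy `D(μ'‖μ) ∈ [0,∞]` (it is `⊤` unless `μ' ≪ μ`). -/
noncomputable def KL (μ' μ : PM X) : EReal := by
  classical
  exact if AbsCont μ' μ then
    ((∑ x, μ'.pm x * Real.log (μ'.pm x / μ.pm x) : ℝ) : EReal)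
  else ⊤

/-- The relative-entropy projection `μ|θ`. -/
def klProj (μ : PM X) (θ : Set (PM X)) : Set (PM X) :=
  {μ' | μ' ∈ θ ∧ KL μ' μ ≠ ⊤ ∧ ∀ μ'' ∈ θ, KL μ' μ ≤ KL μ'' μ}

/-- `D|θ = ⋃_{μ ∈ D} μ|θ`. -/
def DProj (D : Set (PM X)) (θ : Set (PM X)) : Set (PM X) :=
  ⋃ μ ∈ D, klProj μ θ

end KL

section Products

variable {n : ℕ} {X : Fin n → Type} [∀ i, Fintype (X i)]

/-- The `i`-th marginal of a measure on a finite product. -/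
noncomputable def margPi (μ : PM (∀ i, X i)) (i : Fin n) : PM (X i) where
  pm a := μ.prob {x | x i = a}
  nonneg a := PM.prob_nonneg _ _
  total := by
    classical
    unfold PM.prob
    rw [Finset.sum_comm]
    have h : ∀ x : (∀ i, X i),
        (∑ a, ({y : ∀ j, X j | y i = a}).indicator μ.pm x) = μ.pm x := by
      intro x
      simp [Set.indicator_apply]
    simp only [h]
    exact μ.total

/-- `μ` is a product measure on `X₁ × ⋯ × Xₙ`. -/
def IsProdPM (μ : PM (∀ i, X i)) : Prop :=
  ∃ μi : ∀ i, PM (X i), ∀ U : ∀ i, Set (X i),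
    μ.prob {x | ∀ i, x i ∈ U i} = ∏ i, (μi i).prob (U i)

end Products

/-- The set `P_Π(X)` of product measures. -/
def PPi {n : ℕ} (X : Fin n → Type) [∀ i, Fintype (X i)] : Set (PM (∀ i, X i)) :=
  {μ | IsProdPM μ}

/-- `e` is a product embedding. -/
def IsProdEmb {n : ℕ} {X Y : Fin n → Type} (e : Emb (∀ i, X i) (∀ i, Y i)) : Prop :=
  ∃ ei : ∀ i, Emb (X i) (Y i), ∀ S : Set (∀ i, X i),
    e.f S = ⋃ x ∈ S, {y | ∀ i, y i ∈ (ei i).f {x i}}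


/-- any relation satisfying Reflexivity, Right Weakening,
Infinitary And, and Consistency on its domain arises from an `X`-inference
procedure with the same domain. -/
theorem stmt1 {X : Type} [Fintype X] (R : Set (PM X) → Set (PM X) → Prop)
    (refl : ∀ KB, (∃ θ, R KB θ) → R KB KB)
    (rweak : ∀ KB, (∃ θ', R KB θ') → ∀ θ ψ : Set (PM X), R KB θ → θ ⊆ ψ → R KB ψ)
    (infAnd : ∀ KB, (∃ θ', R KB θ') → ∀ Sig : Set (Set (PM X)),
      (∀ θ ∈ Sig, R KB θ) → ∀ ψ : Set (PM X), ⋂₀ Sig ⊆ ψ → R KB ψ)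
    (cons : ∀ KB, (∃ θ', R KB θ') → KB ≠ ∅ → ¬ R KB ∅) :
    ∃ I : InfProc X, I.dom = {KB | ∃ θ, R KB θ} ∧
      ∀ KB, (∃ θ, R KB θ) → ∀ θ : Set (PM X), (R KB θ ↔ Infers I KB θ) := by
  classical
  have key : ∀ A : Set (PM X), (∃ θ, R A θ) → A ∩ ⋂₀ {θ | R A θ} = ⋂₀ {θ | R A θ} := by
    intro A hA
    exact Set.inter_eq_self_of_subset_right (Set.sInter_subset_of_mem (refl A hA))
  refine ⟨{ dom := {KB | ∃ θ, R KB θ}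
            map := fun A => A ∩ ⋂₀ {θ | R A θ}
            map_subset := fun A _ => Set.inter_subset_left
            map_empty_iff := ?_ }, rfl, ?_⟩
  · intro A hA
    constructor
    · intro h
      by_contra hne
      refine cons A hA hne (infAnd A hA {θ | R A θ} (fun θ hθ => hθ) ∅ ?_)
      rw [← key A hA]; exact (show A ∩ ⋂₀ {θ | R A θ} = ∅ from h).subset
    · intro h; rw [h]; exact Set.empty_inter _
  · intro KB hKB θ
    show R KB θ ↔ KB ∩ ⋂₀ {θ | R KB θ} ⊆ θ
    rw [key KB hKB]
    constructor
    · exact fun h => Set.sInter_subset_of_mem h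
    · exact fun h => infAnd KB hKB {θ | R KB θ} (fun θ hθ => hθ) θ h
end

section
/- Let X₀ and X₁ be finite types, let μ⁰ ∈ Δ_{X₀} and μ¹ ∈ Δ_{X₁}, and let S₀ ⊆ X₀ and S₁ ⊆ X₁ be such that μ⁰(S₀) = μ¹(S₁). Then there exists a measure μ² ∈ Δ_{X₀ × X₁} such that μ²_{X₀} = μ⁰, μ²_{X₁} = μ¹, and μ²((S₀ × S₁) ∪ (S₀ᶜ × S₁ᶜ)) = 1. -/
open PM

/-! Put on `S₀ × S₁` the product of the restrictions `μ⁰|S₀` and `μ¹|S₁` divided by their common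
mass `p = μ⁰(S₀) = μ¹(S₁)`, and on `S₀ᶜ × S₁ᶜ` the product of `μ⁰|S₀ᶜ` and `μ¹|S₁ᶜ` divided by
`1 - p`. Each piece has the two restrictions as marginals, so the sum has marginals `μ⁰` and `μ¹`,
and it vanishes off `(S₀ × S₁) ∪ (S₀ᶜ × S₁ᶜ)`. -/

section ScaledProd

variable {X Y : Type*} [Fintype X] {f : X → ℝ} {g : Y → ℝ}

noncomputable def scaledProd (f : X → ℝ) (g : Y → ℝ) (z : X × Y) : ℝ :=
  f z.1 * g z.2 / ∑ x, f x

lemma scaledProd_nonneg (hf : 0 ≤ f) (hg : 0 ≤ g) (z : X × Y) : 0 ≤ scaledProd f g z :=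
  div_nonneg (mul_nonneg (hf _) (hg _)) (Finset.sum_nonneg fun x _ => hf x)

-- When the common mass is `0`, nonnegativity forces `f x = 0`, so dividing by `0` is harmless.
lemma sum_scaledProd_snd [Fintype Y] (hf : 0 ≤ f) (hfg : ∑ x, f x = ∑ y, g y) (x : X) :
    ∑ y, scaledProd f g (x, y) = f x := by
  simp only [scaledProd, ← Finset.sum_div, ← Finset.mul_sum, ← hfg]
  exact mul_div_cancel_of_imp fun h0 =>
    (Finset.sum_eq_zero_iff_of_nonneg fun x _ => hf x).1 h0 x (Finset.mem_univ x)

lemma sum_scaledProd_fst [Fintype Y] (hg : 0 ≤ g) (hfg : ∑ x, f x = ∑ y, g y) (y : Y) :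
    ∑ x, scaledProd f g (x, y) = g y := by
  simp only [scaledProd, ← Finset.sum_div, ← Finset.sum_mul, hfg]
  exact mul_div_cancel_left_of_imp fun h0 =>
    (Finset.sum_eq_zero_iff_of_nonneg fun y _ => hg y).1 h0 y (Finset.mem_univ y)

lemma scaledProd_indicator_eq_zero {S : Set X} {T : Set Y} {z : X × Y} (hz : z ∉ S ×ˢ T) :
    scaledProd (S.indicator f) (T.indicator g) z = 0 := by
  rw [Set.mem_prod, not_and_or] at hz
  rcases hz with hz | hz <;> simp [scaledProd, Set.indicator_of_notMem hz]

end ScaledProd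

namespace PM

variable {X Y : Type} [Fintype X] [Fintype Y]

lemma pm_injective : Function.Injective (pm : PM X → X → ℝ) := by
  rintro ⟨_, _, _⟩ ⟨_, _, _⟩ rfl
  rfl

lemma indicator_pm_nonneg (μ : PM X) (S : Set X) : 0 ≤ S.indicator μ.pm := fun x =>
  Set.indicator_apply_nonneg fun _ => μ.nonneg x

lemma prob_add_prob_compl (μ : PM X) (S : Set X) : μ.prob S + μ.prob Sᶜ = 1 := by
  simp only [prob, ← Finset.sum_add_distrib, Set.indicator_self_add_compl_apply, μ.total]

lemma prob_compl_eq_of_prob_eq {μ : PM X} {ν : PM Y} {S : Set X} {T : Set Y}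
    (h : μ.prob S = ν.prob T) : μ.prob Sᶜ = ν.prob Tᶜ := by
  linarith [μ.prob_add_prob_compl S, ν.prob_add_prob_compl T]

lemma prob_eq_one_of_pm_eq_zero {μ : PM X} {S : Set X} (h : ∀ x ∉ S, μ.pm x = 0) :
    μ.prob S = 1 := by
  rw [prob, Set.indicator_eq_self.2 fun x hx => not_imp_comm.1 (h x) hx, μ.total]

section IffCoupling

variable (μ : PM X) (ν : PM Y) (S : Set X) (T : Set Y)

noncomputable def iffCouplingPm : X × Y → ℝ :=
  scaledProd (S.indicator μ.pm) (T.indicator ν.pm) +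
    scaledProd (Sᶜ.indicator μ.pm) (Tᶜ.indicator ν.pm)

variable {μ ν S T}

lemma sum_iffCouplingPm_snd (h : μ.prob S = ν.prob T) (x : X) :
    ∑ y, iffCouplingPm μ ν S T (x, y) = μ.pm x := by
  simp only [iffCouplingPm, Pi.add_apply, Finset.sum_add_distrib,
    sum_scaledProd_snd (μ.indicator_pm_nonneg S) h,
    sum_scaledProd_snd (μ.indicator_pm_nonneg Sᶜ) (prob_compl_eq_of_prob_eq h),
    Set.indicator_self_add_compl_apply]

lemma sum_iffCouplingPm_fst (h : μ.prob S = ν.prob T) (y : Y) :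
    ∑ x, iffCouplingPm μ ν S T (x, y) = ν.pm y := by
  simp only [iffCouplingPm, Pi.add_apply, Finset.sum_add_distrib,
    sum_scaledProd_fst (ν.indicator_pm_nonneg T) h,
    sum_scaledProd_fst (ν.indicator_pm_nonneg Tᶜ) (prob_compl_eq_of_prob_eq h),
    Set.indicator_self_add_compl_apply]

variable (μ ν S T) in
noncomputable def iffCoupling (h : μ.prob S = ν.prob T) : PM (X × Y) where
  pm := iffCouplingPm μ ν S T
  nonneg z := add_nonneg
    (scaledProd_nonneg (μ.indicator_pm_nonneg S) (ν.indicator_pm_nonneg T) z)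
    (scaledProd_nonneg (μ.indicator_pm_nonneg Sᶜ) (ν.indicator_pm_nonneg Tᶜ) z)
  total := by
    rw [Fintype.sum_prod_type]
    simp only [sum_iffCouplingPm_snd h, μ.total]

lemma margFst_iffCoupling (h : μ.prob S = ν.prob T) : margFst (iffCoupling μ ν S T h) = μ :=
  pm_injective <| funext <| sum_iffCouplingPm_snd h

lemma margSnd_iffCoupling (h : μ.prob S = ν.prob T) : margSnd (iffCoupling μ ν S T h) = ν :=
  pm_injective <| funext <| sum_iffCouplingPm_fst h

lemma prob_iffCoupling (h : μ.prob S = ν.prob T) :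
    (iffCoupling μ ν S T h).prob (S ×ˢ T ∪ Sᶜ ×ˢ Tᶜ) = 1 :=
  prob_eq_one_of_pm_eq_zero fun _ hz => by
    rw [Set.mem_union, not_or] at hz
    simp only [iffCoupling, iffCouplingPm, Pi.add_apply, scaledProd_indicator_eq_zero hz.1,
      scaledProd_indicator_eq_zero hz.2, add_zero]

end IffCoupling

end PM

/-- gluing two measures agreeing on the probability of `S₀` and
`S₁` into a joint measure giving probability 1 to `S₀ ⇔ S₁`. -/
theorem stmt2 {X₀ X₁ : Type} [Fintype X₀] [Fintype X₁]
    (μ0 : PM X₀) (μ1 : PM X₁) (S0 : Set X₀) (S1 : Set X₁)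
    (h : μ0.prob S0 = μ1.prob S1) :
    ∃ μ2 : PM (X₀ × X₁), PM.margFst μ2 = μ0 ∧ PM.margSnd μ2 = μ1 ∧
      μ2.prob ((S0 ×ˢ S1) ∪ (S0ᶜ ×ˢ S1ᶜ)) = 1 :=
  ⟨iffCoupling μ0 μ1 S0 S1 h, margFst_iffCoupling h, margSnd_iffCoupling h, prob_iffCoupling h⟩
end

section
/- Let X and Y be finite types and let f be an X-Y embedding. Then f is faithful if and only if for all constraints KB, θ ⊆ Δ_X: KB ⊆ θ holds iff f*(KB) ⊆ f*(θ). -/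
open PM

/-! Both sides are equivalent to: every `μ ∈ Δ_X` has a corresponding `ν ∈ Δ_Y`.
If `f` is faithful, each `f {x}` is nonempty, and the pushforward of `μ` along a choice of points
`x ↦ y x ∈ f {x}` corresponds to `μ`. Conversely, a measure corresponding to the Dirac measure
at `x ∈ S` gives `1 = ν (f S) ≤ ν (f T) = δₓ(T)` whenever `f S ⊆ f T`, so `x ∈ T`.
On the side of `f*`: since `μ({x}) = ν(f {x})`, a measure `ν` corresponds to at most one `μ`, so
`f*` reflects inclusion as soon as no `f*{μ}` is empty; and `f*{μ} ⊆ f*∅ = ∅` is ruled out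
when `f*` reflects inclusion. -/

namespace PM

variable {X Y : Type} [Fintype X] [Fintype Y]

lemma ext_pm {μ ν : PM X} (h : μ.pm = ν.pm) : μ = ν := by
  cases μ; cases ν; simpa using h

lemma prob_singleton (μ : PM X) (x : X) : μ.prob {x} = μ.pm x := by
  classical
  simp [prob, Set.indicator_apply]

lemma prob_mono (μ : PM X) {S T : Set X} (h : S ⊆ T) : μ.prob S ≤ μ.prob T :=
  Finset.sum_le_sum fun x _ => Set.indicator_le_indicator_of_subset h μ.nonneg x

noncomputable def dirac [DecidableEq X] (x₀ : X) : PM X where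
  pm x := if x = x₀ then 1 else 0
  nonneg x := by split_ifs <;> norm_num
  total := by simp

lemma dirac_prob [DecidableEq X] (x₀ : X) (S : Set X) [Decidable (x₀ ∈ S)] :
    (dirac x₀).prob S = if x₀ ∈ S then 1 else 0 := by
  rw [prob, Fintype.sum_eq_single x₀ fun x hx => by simp [dirac, hx]]
  simp [dirac, Set.indicator_apply]

noncomputable def map [DecidableEq Y] (g : X → Y) (μ : PM X) : PM Y where
  pm y := ∑ x, if g x = y then μ.pm x else 0
  nonneg y := Finset.sum_nonneg fun x _ => by split_ifs <;> simp [μ.nonneg x]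
  total := by rw [Finset.sum_comm]; simp [μ.total]

lemma map_prob [DecidableEq Y] (g : X → Y) (μ : PM X) (T : Set Y) :
    (μ.map g).prob T = μ.prob (g ⁻¹' T) := by
  classical
  simp only [prob, map, Set.indicator_apply, Set.mem_preimage, ← Finset.sum_filter]
  rw [Finset.sum_fiberwise_eq_sum_filter]
  simp

end PM

namespace Emb

variable {X Y : Type} (e : Emb X Y)

lemma monotone : Monotone e.f := fun S T h => by
  rw [← Set.union_eq_self_of_subset_left h, e.map_union]
  exact Set.subset_union_left

lemma map_empty : e.f ∅ = ∅ :=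
  calc e.f ∅ = (e.f Set.univ)ᶜ := by rw [← e.map_compl, Set.compl_univ]
    _ = (e.f ∅ ∪ (e.f ∅)ᶜ)ᶜ := by rw [← e.map_compl ∅, ← e.map_union, Set.union_compl_self]
    _ = ∅ := by rw [Set.union_compl_self, Set.compl_univ]

lemma mem_iff_of_mem_singleton {x : X} {y : Y} (hy : y ∈ e.f {x}) (S : Set X) :
    y ∈ e.f S ↔ x ∈ S := by
  refine ⟨fun hyS => ?_, fun hx => e.monotone (Set.singleton_subset_iff.2 hx) hy⟩
  by_contra hx
  have hyS' : y ∈ e.f Sᶜ := e.monotone (Set.singleton_subset_iff.2 hx) hy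
  exact (e.map_compl S ▸ hyS') hyS

lemma Faithful.nonempty_singleton {e : Emb X Y} (he : e.Faithful) (x : X) :
    (e.f {x}).Nonempty := by
  rw [Set.nonempty_iff_ne_empty, ← e.map_empty]
  intro h
  simpa using (he {x} ∅).2 h.le

end Emb

section Correspondence

variable {X Y : Type} [Fintype X] [Fintype Y] {e : Emb X Y} {μ μ' : PM X} {ν : PM Y}

lemma Corr.unique (h : Corr e μ ν) (h' : Corr e μ' ν) : μ = μ' :=
  PM.ext_pm <| funext fun x => by
    simpa only [PM.prob_singleton] using (h {x}).trans (h' {x}).symm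

lemma Corr.prob_le_prob (h : Corr e μ ν) {S T : Set X} (hST : e.f S ⊆ e.f T) :
    μ.prob S ≤ μ.prob T := by
  rw [h S, h T]
  exact ν.prob_mono hST

lemma Emb.Faithful.exists_corr (he : e.Faithful) (μ : PM X) : ∃ ν : PM Y, Corr e μ ν := by
  classical
  choose y hy using he.nonempty_singleton
  refine ⟨μ.map y, fun S => ?_⟩
  rw [PM.map_prob]
  congr 1
  ext x
  exact (e.mem_iff_of_mem_singleton (hy x) S).symm

lemma Emb.faithful_of_forall_exists_corr (h : ∀ μ : PM X, ∃ ν : PM Y, Corr e μ ν) :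
    e.Faithful := by
  classical
  refine fun S T => ⟨fun hST => e.monotone hST, fun hST x hx => ?_⟩
  obtain ⟨ν, hν⟩ := h (PM.dirac x)
  have hle := hν.prob_le_prob hST
  rw [PM.dirac_prob, PM.dirac_prob, if_pos hx] at hle
  by_contra hxT
  norm_num [hxT] at hle

lemma Emb.faithful_iff_forall_exists_corr :
    e.Faithful ↔ ∀ μ : PM X, ∃ ν : PM Y, Corr e μ ν :=
  ⟨Emb.Faithful.exists_corr, Emb.faithful_of_forall_exists_corr⟩

lemma fstar_mono : Monotone (fstar e) := fun _ _ hKB _ ⟨μ, hμ, hc⟩ => ⟨μ, hKB hμ, hc⟩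

lemma subset_of_fstar_subset_fstar (h : ∀ μ : PM X, ∃ ν : PM Y, Corr e μ ν)
    {KB θ : Set (PM X)} (hKB : fstar e KB ⊆ fstar e θ) : KB ⊆ θ := fun μ hμ => by
  obtain ⟨ν, hν⟩ := h μ
  obtain ⟨μ', hμ', hν'⟩ := hKB ⟨μ, hμ, hν⟩
  rwa [hν.unique hν']

end Correspondence

/-- an embedding is faithful iff it preserves entailment of
constraints in both directions. -/
theorem stmt4 {X Y : Type} [Fintype X] [Fintype Y] (e : Emb X Y) :
    e.Faithful ↔ ∀ KB θ : Set (PM X), (KB ⊆ θ ↔ fstar e KB ⊆ fstar e θ) := by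
  rw [Emb.faithful_iff_forall_exists_corr]
  refine ⟨fun h KB θ => ⟨fun hKB => fstar_mono hKB, subset_of_fstar_subset_fstar h⟩,
    fun h μ => ?_⟩
  have hμ : ¬ fstar e {μ} ⊆ fstar e ∅ := fun hsub => (h {μ} ∅).2 hsub rfl
  obtain ⟨ν, ⟨_, rfl, hν⟩, -⟩ := Set.not_subset.1 hμ
  exact ⟨ν, hν⟩
end

section
/- Let X and Y be finite types, let f be a faithful X-Y embedding, and let μ ∈ Δ_X and ν ∈ Δ_Y. Then the following are equivalent: (a) μ and ν correspond under f; (b) for every constraint θ ⊆ Δ_X, μ ∈ θ iff ν ∈ f*(θ). -/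
open PM

/-- for a faithful embedding, `μ` and `ν` correspond iff they
satisfy exactly the corresponding constraints. -/
theorem stmt5 {X Y : Type} [Fintype X] [Fintype Y] (e : Emb X Y) (hf : e.Faithful)
    (μ : PM X) (ν : PM Y) :
    Corr e μ ν ↔ ∀ θ : Set (PM X), (μ ∈ θ ↔ ν ∈ fstar e θ) := by
  classical
  have ext_of_prob : ∀ μ₁ μ₂ : PM X, (∀ S, μ₁.prob S = μ₂.prob S) → μ₁ = μ₂ := by
    intro μ₁ μ₂ h
    cases μ₁ with
    | mk pm₁ n₁ t₁ =>
      cases μ₂ with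
      | mk pm₂ n₂ t₂ =>
        have : pm₁ = pm₂ := by
          funext x
          have := h {x}
          simpa [PM.prob, Set.indicator_apply] using this
        subst this
        rfl
  constructor
  · intro hc θ
    constructor
    · intro hμ
      exact ⟨μ, hμ, hc⟩
    · rintro ⟨μ', hμ', hc'⟩
      have : μ' = μ := ext_of_prob μ' μ (fun S => by rw [hc' S, hc S])
      rwa [← this]
  · intro h
    have := (h {μ}).mp rfl
    rcases this with ⟨μ', hμ', hc'⟩
    rwa [← hμ']
end

section
/- Let I be a finitary inference procedure. Suppose that for some finite type X there exist sets S, S₁, …, S_k ⊆ X and a nonempty constraint KB ∈ dom(I_X) that depends only on S₁, …, S_k, such that (i) for every nonempty atom T over S₁, …, S_k, both T ∩ S and T ∩ Sᶜ are nonempty, and (ii) KB ⊢_{I_X} {μ : α < μ(S) < β} for reals α, β with α > 0 or β < 1. Then I is not representation independent. -/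
open PM

section Aux

open Classical in
/-- Pushforward of a pmf along a map. -/
noncomputable def push {A B : Type} [Fintype A] [Fintype B] (g : A → B) (ν : PM A) : PM B where
  pm b := ∑ a, if g a = b then ν.pm a else 0
  nonneg b := Finset.sum_nonneg fun a _ => by split <;> simp [ν.nonneg a]
  total := by
    rw [Finset.sum_comm]
    simp [ν.total]

lemma push_prob {A B : Type} [Fintype A] [Fintype B] (g : A → B) (ν : PM A) (T : Set B) :
    (push g ν).prob T = ν.prob (g ⁻¹' T) := by
  classical
  unfold push PM.prob
  simp only [Set.indicator_apply]
  have h : ∀ b, (if b ∈ T then ∑ a, if g a = b then ν.pm a else 0 else 0)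
      = ∑ a, if g a = b then (if g a ∈ T then ν.pm a else 0) else 0 := by
    intro b
    split
    · apply Finset.sum_congr rfl; intro a _; split <;> simp_all
    · symm; apply Finset.sum_eq_zero; intro a _; split <;> simp_all
  simp only [h]
  rw [Finset.sum_comm]
  apply Finset.sum_congr rfl
  intro a _
  simp [Set.mem_preimage]

lemma prob_compl' {X : Type} [Fintype X] (μ : PM X) (T : Set X) :
    μ.prob Tᶜ = 1 - μ.prob T := by
  classical
  have h : μ.prob Tᶜ + μ.prob T = 1 := by
    unfold PM.prob
    rw [← Finset.sum_add_distrib, ← μ.total]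
    apply Finset.sum_congr rfl
    intro x _
    by_cases h : x ∈ T <;> simp [Set.indicator_apply, h]
  linarith

lemma prob_le_one' {X : Type} [Fintype X] (μ : PM X) (T : Set X) : μ.prob T ≤ 1 := by
  classical
  rw [← μ.total]
  apply Finset.sum_le_sum
  intro x _
  by_cases h : x ∈ T <;> simp [Set.indicator_apply, h, μ.nonneg x]

lemma sum_prob_fiber {X : Type} [Fintype X] {N : ℕ} (ν : PM (X × Fin N)) (S' : Set X) :
    ∑ j, ν.prob (S' ×ˢ ({j} : Set (Fin N))) = ν.prob (S' ×ˢ (Set.univ : Set (Fin N))) := by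
  classical
  unfold PM.prob
  rw [Finset.sum_comm]
  apply Finset.sum_congr rfl
  intro p _
  simp only [Set.indicator_apply, Set.mem_prod, Set.mem_singleton_iff, Set.mem_univ, and_true]
  by_cases h : p.1 ∈ S' <;> simp [h, Finset.sum_ite_eq]

/-- The embedding induced by a map `g : Y → X` (taking preimages). -/
def embOf {X Y : Type} (g : Y → X) : Emb X Y where
  f S := g ⁻¹' S
  map_union _ _ := rfl
  map_compl _ := rfl

lemma embOf_faithful {X Y : Type} {g : Y → X} (hg : Function.Surjective g) :
    (embOf g).Faithful := by
  intro S T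
  constructor
  · intro h y hy; exact h hy
  · intro h x hx
    obtain ⟨y, rfl⟩ := hg x
    exact h hx

open Classical in
lemma mem_atom_self {X : Type} {k : ℕ} (Sf : Fin k → Set X) (x : X) :
    x ∈ Atom Sf (fun i => decide (x ∈ Sf i)) := by
  classical
  simp only [Atom, Set.mem_iInter]
  intro i
  by_cases h : x ∈ Sf i <;> simp [h]

lemma mem_Sf_of_mem_atom {X : Type} {k : ℕ} {Sf : Fin k → Set X} {c : Fin k → Bool}
    {y : X} (hy : y ∈ Atom Sf c) (i : Fin k) : y ∈ Sf i ↔ c i = true := by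
  classical
  simp only [Atom, Set.mem_iInter] at hy
  have h := hy i
  cases hc : c i <;> rw [hc] at h <;> simp_all

end Aux

/-- if some nonempty knowledge base depending only on
`S₁, …, S_k` yields a nontrivial conclusion `α < Pr(S) < β` where `S` splits
every nonempty atom, then the procedure is not representation independent. -/
theorem stmt9 (I : ∀ (X : Type) [Fintype X], InfProc X)
    (X : Type) [Fintype X] (k : ℕ) (S : Set X) (Sf : Fin k → Set X)
    (KB : Set (PM X)) (hne : KB ≠ ∅) (hdom : KB ∈ (I X).dom)
    (hdep : DependsOnly KB Sf)
    (hatoms : ∀ c : Fin k → Bool, Atom Sf c ≠ ∅ →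
      (Atom Sf c ∩ S ≠ ∅ ∧ Atom Sf c ∩ Sᶜ ≠ ∅))
    (α β : ℝ) (hnontriv : 0 < α ∨ β < 1)
    (hinf : Infers (I X) KB {μ : PM X | α < μ.prob S ∧ μ.prob S < β}) :
    ¬ RepInd I := by
  classical
  intro hRI
  set θ : Set (PM X) := {μ : PM X | α < μ.prob S ∧ μ.prob S < β} with hθdef
  obtain ⟨S', γ, hγ, hrtgt, hθS'⟩ :
      ∃ (S' : Set X) (γ : ℝ), 0 < γ ∧
        (∀ c : Fin k → Bool, Atom Sf c ≠ ∅ → (Atom Sf c ∩ S'ᶜ).Nonempty) ∧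
        (∀ μ ∈ θ, γ < μ.prob S') := by
    rcases hnontriv with hα | hβ
    · refine ⟨S, α, hα, ?_, ?_⟩
      · intro c hc; exact Set.nonempty_iff_ne_empty.2 (hatoms c hc).2
      · intro μ hμ; exact hμ.1
    · refine ⟨Sᶜ, 1 - β, by linarith, ?_, ?_⟩
      · intro c hc
        rw [compl_compl]
        exact Set.nonempty_iff_ne_empty.2 (hatoms c hc).1
      · intro μ hμ; rw [prob_compl']; linarith [hμ.2]
  have hrex : ∀ x : X, ∃ y : X, (∀ i, (x ∈ Sf i ↔ y ∈ Sf i)) ∧ y ∉ S' := by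
    intro x
    have hx := mem_atom_self Sf x
    have hne' : Atom Sf (fun i => decide (x ∈ Sf i)) ≠ ∅ :=
      Set.nonempty_iff_ne_empty.1 ⟨x, hx⟩
    obtain ⟨y, hy1, hy2⟩ := hrtgt _ hne'
    refine ⟨y, fun i => ?_, hy2⟩
    rw [mem_Sf_of_mem_atom hx i, mem_Sf_of_mem_atom hy1 i]
  choose r hr1 hr2 using hrex
  set N : ℕ := ⌈γ⁻¹⌉₊ + 1 with hN
  have hNpos : 0 < N := Nat.succ_pos _
  have hNγ : 1 < (N : ℝ) * γ := by
    have h1 : (γ : ℝ)⁻¹ ≤ (⌈γ⁻¹⌉₊ : ℝ) := Nat.le_ceil _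
    have h2 : γ⁻¹ < (N : ℝ) := by
      rw [hN]; push_cast; linarith
    calc (1 : ℝ) = γ⁻¹ * γ := by field_simp
    _ < (N : ℝ) * γ := mul_lt_mul_of_pos_right h2 hγ
  set g : Fin N → (X × Fin N) → X := fun j p => if p.2 = j then p.1 else r p.1 with hg
  have hgsurj : ∀ j, Function.Surjective (g j) := fun j x => ⟨(x, j), by simp [hg]⟩
  have hgSf : ∀ j i, g j ⁻¹' (Sf i) = Prod.fst ⁻¹' (Sf i) := by
    intro j i
    ext p
    simp only [Set.mem_preimage, hg]
    split
    · exact Iff.rfl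
    · exact (hr1 p.1 i).symm
  have hgS' : ∀ j, g j ⁻¹' S' = S' ×ˢ ({j} : Set (Fin N)) := by
    intro j
    ext p
    simp only [Set.mem_preimage, Set.mem_prod, Set.mem_singleton_iff, hg]
    split
    · next h => exact ⟨fun hp => ⟨hp, h⟩, fun hp => hp.1⟩
    · next h => exact ⟨fun hp => absurd hp (hr2 p.1), fun hp => absurd hp.2 h⟩
  set e : Fin N → Emb X (X × Fin N) := fun j => embOf (g j) with he
  have hfaith : ∀ j, (e j).Faithful := fun j => embOf_faithful (hgsurj j)
  set j₀ : Fin N := ⟨0, hNpos⟩ with hj₀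
  have hKB' : ∀ j, fstar (e j) KB = fstar (e j₀) KB := by
    have key : ∀ j j', fstar (e j) KB ⊆ fstar (e j') KB := by
      rintro j j' ν ⟨μ, hμ, hc⟩
      refine ⟨push (g j') ν, ?_, fun T => push_prob (g j') ν T⟩
      apply (hdep μ _ ?_).1 hμ
      intro i
      have hc' : μ.prob (Sf i) = ν.prob (g j ⁻¹' (Sf i)) := hc (Sf i)
      rw [push_prob, hgSf j' i, ← hgSf j i]
      exact hc'
    intro j
    exact Set.Subset.antisymm (key j j₀) (key j₀ j)
  obtain ⟨μ₀, hμ₀⟩ := Set.nonempty_iff_ne_empty.2 hne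
  have hcorr0 : Corr (e j₀) μ₀ (push (fun x => (x, j₀)) μ₀) := by
    intro T
    have : (e j₀).f T = g j₀ ⁻¹' T := rfl
    rw [this, push_prob]
    congr 1
  have hKB'ne : fstar (e j₀) KB ≠ ∅ :=
    Set.nonempty_iff_ne_empty.1 ⟨_, μ₀, hμ₀, hcorr0⟩
  have hdom' : fstar (e j₀) KB ∈ (I (X × Fin N)).dom :=
    ((hRI X (X × Fin N) (e j₀) (hfaith j₀)).1 KB).1 hdom
  have hmapne : (I (X × Fin N)).map (fstar (e j₀) KB) ≠ ∅ := by
    intro h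
    exact hKB'ne (((I (X × Fin N)).map_empty_iff _ hdom').1 h)
  obtain ⟨ν, hν⟩ := Set.nonempty_iff_ne_empty.2 hmapne
  have hbound : ∀ j : Fin N, γ < ν.prob (S' ×ˢ ({j} : Set (Fin N))) := by
    intro j
    have h1 : Infers (I (X × Fin N)) (fstar (e j) KB) (fstar (e j) θ) :=
      ((hRI X (X × Fin N) (e j) (hfaith j)).2 KB hdom θ).1 hinf
    rw [hKB' j] at h1
    obtain ⟨μ, hμθ, hc⟩ := h1 hν
    have hγμ := hθS' μ hμθ
    have hc' : μ.prob S' = ν.prob (g j ⁻¹' S') := hc S'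
    rw [hgS' j] at hc'
    linarith
  have hsum : ∑ j : Fin N, ν.prob (S' ×ˢ ({j} : Set (Fin N))) ≤ 1 := by
    rw [sum_prob_fiber]
    exact prob_le_one' ν _
  have hlt : (N : ℝ) * γ < ∑ j : Fin N, ν.prob (S' ×ˢ ({j} : Set (Fin N))) := by
    have huniv : (Finset.univ : Finset (Fin N)).Nonempty := ⟨j₀, Finset.mem_univ _⟩
    have := Finset.sum_lt_sum_of_nonempty huniv (fun j _ => hbound j)
    simpa [mul_comm] using this
  linarith
end

section
/- Let X and Y be finite types, let f be a faithful X-Y embedding, let S ⊆ X, and let D_X ⊆ Δ_X and D_Y ⊆ Δ_Y correspond under f, where every μ ∈ D_X satisfies μ(S) > 0. Then D_X|S = {μ|S : μ ∈ D_X} and D_Y|f(S) = {ν|f(S) : ν ∈ D_Y} also correspond under f. -/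
open PM

section
variable {X Y : Type} [Fintype X] [Fintype Y]

lemma my_f_inter (e : Emb X Y) (A S : Set X) : e.f (A ∩ S) = e.f A ∩ e.f S := by
  have : A ∩ S = (Aᶜ ∪ Sᶜ)ᶜ := by simp [Set.compl_union]
  rw [this, e.map_compl, e.map_union, e.map_compl, e.map_compl, Set.compl_union,
    compl_compl, compl_compl]

lemma my_prob_cond (μ : PM X) (S A : Set X) (h : 0 < μ.prob S) :
    (μ.cond S).prob A = μ.prob (A ∩ S) / μ.prob S := by
  unfold PM.cond
  rw [dif_pos h]
  unfold PM.prob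
  rw [Finset.sum_div]
  apply Finset.sum_congr rfl
  intro x _
  classical
  by_cases hA : x ∈ A <;> by_cases hS : x ∈ S <;>
    simp [Set.indicator_apply, hA, hS]

lemma my_corr_cond (e : Emb X Y) (μ : PM X) (ν : PM Y) (hc : Corr e μ ν)
    (S : Set X) (h : 0 < μ.prob S) : Corr e (μ.cond S) (ν.cond (e.f S)) := by
  intro A
  have hν : ν.prob (e.f S) = μ.prob S := (hc S).symm
  rw [my_prob_cond _ _ _ h, my_prob_cond _ _ _ (hν ▸ h), hν, hc (A ∩ S), my_f_inter]
end

/-- conditioning sets of measures preserves correspondence under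
a faithful embedding. -/
theorem stmt14 {X Y : Type} [Fintype X] [Fintype Y] (e : Emb X Y)
    (hf : e.Faithful) (S : Set X) (DX : Set (PM X)) (DY : Set (PM Y))
    (hc : SetCorr e DX DY) (hpos : ∀ μ ∈ DX, 0 < μ.prob S) :
    SetCorr e ((fun μ : PM X => μ.cond S) '' DX)
      ((fun ν : PM Y => ν.cond (e.f S)) '' DY) := by
  obtain ⟨h1, h2⟩ := hc
  constructor
  · rintro ν' ⟨ν, hν, rfl⟩
    obtain ⟨μ, hμ, hcorr⟩ := h1 ν hν
    exact ⟨μ.cond S, ⟨μ, hμ, rfl⟩, my_corr_cond e μ ν hcorr S (hpos μ hμ)⟩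
  · rintro μ' ⟨μ, hμ, rfl⟩
    obtain ⟨ν, hν, hcorr⟩ := h2 μ hμ
    exact ⟨ν.cond (e.f S), ⟨ν, hν, rfl⟩, my_corr_cond e μ ν hcorr S (hpos μ hμ)⟩
end
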